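/- arXiv:2406.18613 — 5 statements merged into one kernel-verified Lean document; each statement's English description precedes it below -/
import Mathlib

section
/- If the composition operator C_h maps L²(Ω) into itself, then its operator norm equals the square root of the essential supremum of g_h, i.e., ‖C_h‖ = ‖g_h‖_{L^∞}^{1/2}. -/
open MeasureTheory ENNReal

/-- Lebesgue measure on a subset `Ω` of `ℝ^d`, viewed as a measure on the subtype. -/
noncomputable def lebOn {d : ℕ} (Ω : Set (EuclideanSpace ℝ (Fin d))) : Measure Ω :=
  (volume : Measure (EuclideanSpace ℝ (Fin d))).comap Subtype.val

/-! With `g = d(h₊μ)/dν`, the `Lᵖ(μ)`-norm of `f ∘ h` is the `Lᵖ(h₊μ)`-norm of `f`, and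
`h₊μ = g • ν ≤ (ess sup g) • ν`, so `‖C_h‖ ≤ (ess sup g)^(1/p)`. Conversely, if `c < ess sup g`
then `{g > c}` has positive measure; on a subset `t` of it of finite positive measure
`h₊μ ≥ c • ν`, and testing `C_h` on the indicator of `t` gives `‖C_h‖ ≥ c^(1/p)`. -/

namespace MeasureTheory

namespace Measure

variable {β : Type*} [MeasurableSpace β] {μ ν : Measure β}

theorem le_essSup_rnDeriv_smul [μ.HaveLebesgueDecomposition ν] (hμν : μ ≪ ν) :
    μ ≤ essSup (μ.rnDeriv ν) ν • ν :=
  calc μ = ν.withDensity (μ.rnDeriv ν) := (withDensity_rnDeriv_eq μ ν hμν).symm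
    _ ≤ ν.withDensity fun _ ↦ essSup (μ.rnDeriv ν) ν := withDensity_mono (ENNReal.ae_le_essSup _)
    _ = essSup (μ.rnDeriv ν) ν • ν := withDensity_const _

theorem smul_restrict_le_restrict_of_subset_lt_rnDeriv {c : ℝ≥0∞} {t : Set β}
    (ht : MeasurableSet t) (htc : t ⊆ {x | c < μ.rnDeriv ν x}) :
    c • ν.restrict t ≤ μ.restrict t :=
  calc c • ν.restrict t = (ν.restrict t).withDensity fun _ ↦ c := (withDensity_const c).symm
    _ ≤ (ν.restrict t).withDensity (μ.rnDeriv ν) :=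
        withDensity_mono ((ae_restrict_mem ht).mono fun _ hx ↦ (htc hx).le)
    _ = (ν.withDensity (μ.rnDeriv ν)).restrict t := (restrict_withDensity ht _).symm
    _ ≤ μ.restrict t := restrict_mono le_rfl (withDensity_rnDeriv_le μ ν)

theorem exists_subset_lt_rnDeriv_of_lt_essSup [SigmaFinite ν] {c : ℝ≥0∞}
    (hc : c < essSup (μ.rnDeriv ν) ν) :
    ∃ t, MeasurableSet t ∧ t ⊆ {x | c < μ.rnDeriv ν x} ∧ 0 < ν t ∧ ν t < ∞ := by
  have hpos : 0 < ν {x | c < μ.rnDeriv ν x} := by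
    refine pos_iff_ne_zero.2 fun h0 ↦ hc.not_ge (essSup_le_of_ae_le c ?_)
    simpa [Filter.EventuallyLE, ae_iff] using h0
  exact exists_subset_measure_lt_top
    (measurableSet_lt measurable_const (measurable_rnDeriv μ ν)) hpos

end Measure

section CompositionOperator

variable {α β E 𝕜 : Type*} [MeasurableSpace α] [MeasurableSpace β] {μ : Measure α}
  {ν : Measure β} [NormedAddCommGroup E] [NontriviallyNormedField 𝕜] [NormedSpace 𝕜 E]
  {p : ℝ≥0∞} [Fact (1 ≤ p)] {h : α → β} {T : Lp E p ν →L[𝕜] Lp E p μ}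

theorem enorm_apply_eq_eLpNorm_map (hm : AEMeasurable h μ) (hac : μ.map h ≪ ν)
    (hT : ∀ f : Lp E p ν, T f =ᵐ[μ] fun x ↦ f (h x)) (f : Lp E p ν) :
    ‖T f‖ₑ = eLpNorm f p (μ.map h) := by
  rw [Lp.enorm_def, eLpNorm_congr_ae (hT f),
    eLpNorm_map_measure ((Lp.aestronglyMeasurable f).mono_ac hac) hm]
  rfl

theorem opENorm_le_essSup_rnDeriv_rpow [SFinite μ] [SigmaFinite ν] (hp : p ≠ ∞)
    (hm : AEMeasurable h μ) (hac : μ.map h ≪ ν)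
    (hT : ∀ f : Lp E p ν, T f =ᵐ[μ] fun x ↦ f (h x)) :
    ‖T‖ₑ ≤ essSup ((μ.map h).rnDeriv ν) ν ^ (1 / p).toReal :=
  T.opENorm_le_bound fun f ↦ by
    rw [enorm_apply_eq_eLpNorm_map hm hac hT, Lp.enorm_def, ← smul_eq_mul,
      ← eLpNorm_smul_measure_of_ne_top hp]
    exact eLpNorm_mono_measure _ (Measure.le_essSup_rnDeriv_smul hac)

theorem rpow_le_opENorm_of_lt_essSup_rnDeriv [SigmaFinite ν] [Nontrivial E] (hp : p ≠ ∞)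
    (hm : AEMeasurable h μ) (hac : μ.map h ≪ ν)
    (hT : ∀ f : Lp E p ν, T f =ᵐ[μ] fun x ↦ f (h x)) {c : ℝ≥0∞}
    (hc : c < essSup ((μ.map h).rnDeriv ν) ν) :
    c ^ (1 / p).toReal ≤ ‖T‖ₑ := by
  obtain ⟨t, ht, htc, hνt_pos, hνt_lt⟩ := Measure.exists_subset_lt_rnDeriv_of_lt_essSup hc
  obtain ⟨e, he⟩ := exists_ne (0 : E)
  set f := indicatorConstLp p ht hνt_lt.ne e
  have hsupp : (t.indicator fun _ ↦ e).support ⊆ t := Set.support_indicator_subset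
  have hf : ‖f‖ₑ = ‖e‖ₑ * ν t ^ (1 / p.toReal) := by
    rw [Lp.enorm_def, eLpNorm_congr_ae indicatorConstLp_coeFn,
      eLpNorm_indicator_const' ht hνt_pos.ne' (zero_lt_one.trans_le Fact.out).ne']
  have hf_ne_zero : ‖f‖ₑ ≠ 0 := by
    rw [hf]
    exact mul_ne_zero (enorm_ne_zero.2 he) (rpow_pos hνt_pos hνt_lt.ne).ne'
  rw [← ENNReal.mul_le_mul_iff_left hf_ne_zero enorm_ne_top]
  calc c ^ (1 / p).toReal * ‖f‖ₑ
      = c ^ (1 / p).toReal * eLpNorm (t.indicator fun _ ↦ e) p (ν.restrict t) := by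
        rw [Lp.enorm_def, eLpNorm_congr_ae indicatorConstLp_coeFn,
          eLpNorm_restrict_eq_of_support_subset hsupp]
    _ = eLpNorm (t.indicator fun _ ↦ e) p (c • ν.restrict t) :=
        (eLpNorm_smul_measure_of_ne_top hp _ _).symm
    _ ≤ eLpNorm (t.indicator fun _ ↦ e) p ((μ.map h).restrict t) :=
        eLpNorm_mono_measure _ (Measure.smul_restrict_le_restrict_of_subset_lt_rnDeriv ht htc)
    _ = eLpNorm f p (μ.map h) := by
        rw [eLpNorm_restrict_eq_of_support_subset hsupp,
          eLpNorm_congr_ae (hac.ae_le indicatorConstLp_coeFn)]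
    _ = ‖T f‖ₑ := (enorm_apply_eq_eLpNorm_map hm hac hT f).symm
    _ ≤ ‖T‖ₑ * ‖f‖ₑ := T.le_opENorm f

theorem opENorm_eq_essSup_rnDeriv_rpow [SFinite μ] [SigmaFinite ν] [Nontrivial E]
    (hp : p ≠ ∞) (hm : AEMeasurable h μ) (hac : μ.map h ≪ ν)
    (hT : ∀ f : Lp E p ν, T f =ᵐ[μ] fun x ↦ f (h x)) :
    ‖T‖ₑ = essSup ((μ.map h).rnDeriv ν) ν ^ (1 / p).toReal := by
  refine le_antisymm (opENorm_le_essSup_rnDeriv_rpow hp hm hac hT) ?_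
  have hp_pos : 0 < p.toReal := ENNReal.toReal_pos (zero_lt_one.trans_le Fact.out).ne' hp
  rw [one_div, toReal_inv, rpow_inv_le_iff hp_pos]
  refine le_of_forall_lt_imp_le_of_dense fun c hc ↦ ?_
  have := rpow_le_opENorm_of_lt_essSup_rnDeriv hp hm hac hT hc
  rwa [one_div, toReal_inv, rpow_inv_le_iff hp_pos] at this

end CompositionOperator

end MeasureTheory

theorem sigmaFinite_lebOn {d : ℕ} {Ω : Set (EuclideanSpace ℝ (Fin d))} (hΩ : MeasurableSet Ω) :
    SigmaFinite (lebOn Ω) :=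
  SigmaFinite.of_map _ measurable_subtype_coe.aemeasurable <| by
    rw [lebOn, map_comap_subtype_coe hΩ]
    infer_instance

theorem composition_operator_norm_general
    {d : ℕ} (Ω : Set (EuclideanSpace ℝ (Fin d))) (hΩ : IsOpen Ω)
    (h : Ω → Ω) (hm : Measurable h)
    (hac : (lebOn Ω).map h ≪ lebOn Ω)
    (T : Lp ℝ 2 (lebOn Ω) →L[ℝ] Lp ℝ 2 (lebOn Ω))
    (hT : ∀ f : Lp ℝ 2 (lebOn Ω), (T f : Ω → ℝ) =ᵐ[lebOn Ω] fun x => f (h x)) :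
    ‖T‖ = Real.sqrt (essSup (((lebOn Ω).map h).rnDeriv (lebOn Ω)) (lebOn Ω)).toReal := by
  have := sigmaFinite_lebOn hΩ.measurableSet
  rw [← toReal_enorm, opENorm_eq_essSup_rnDeriv_rpow ofNat_ne_top hm.aemeasurable hac hT,
    ← toReal_rpow, Real.sqrt_eq_rpow]
  norm_num

theorem composition_operator_norm
    {d : ℕ} (Ω : Set (EuclideanSpace ℝ (Fin d))) (hΩ : IsOpen Ω)
    (h : Ω → Ω) (hm : Measurable h)
    (hac : (lebOn Ω).map h ≪ lebOn Ω)
    (hbd : essSup (((lebOn Ω).map h).rnDeriv (lebOn Ω)) (lebOn Ω) ≠ ⊤)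
    (T : Lp ℝ 2 (lebOn Ω) →L[ℝ] Lp ℝ 2 (lebOn Ω))
    (hT : ∀ f : Lp ℝ 2 (lebOn Ω), (T f : Ω → ℝ) =ᵐ[lebOn Ω] fun x => f (h x)) :
    ‖T‖ = Real.sqrt (essSup (((lebOn Ω).map h).rnDeriv (lebOn Ω)) (lebOn Ω)).toReal :=
  composition_operator_norm_general Ω hΩ h hm hac T hT
end

section
/- If h: Ω → Ω is a measurable mapping inducing a bounded composition operator C_h on L²(Ω), and there exists r > 0 with g_h ≥ r almost everywhere, then μ is absolutely continuous with respect to h_#μ and C_h is injective. -/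
open MeasureTheory ENNReal

theorem composition_operator_injective
    {d : ℕ} (Ω : Set (EuclideanSpace ℝ (Fin d))) (hΩ : IsOpen Ω)
    (h : Ω → Ω) (hm : Measurable h)
    (hac : (lebOn Ω).map h ≪ lebOn Ω)
    (T : Lp ℝ 2 (lebOn Ω) →L[ℝ] Lp ℝ 2 (lebOn Ω))
    (hT : ∀ f : Lp ℝ 2 (lebOn Ω), (T f : Ω → ℝ) =ᵐ[lebOn Ω] fun x => f (h x))
    (r : ℝ≥0∞) (hr : 0 < r)
    (hge : ∀ᵐ x ∂(lebOn Ω), r ≤ ((lebOn Ω).map h).rnDeriv (lebOn Ω) x) :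
    lebOn Ω ≪ (lebOn Ω).map h ∧ Function.Injective T := by
  set μ := lebOn Ω with hμ
  have key : μ ≪ μ.map h := by
    refine Measure.AbsolutelyContinuous.mk fun s hs hs0 => ?_
    have h1 : ∫⁻ x in s, (μ.map h).rnDeriv μ x ∂μ ≤ (μ.map h) s :=
      Measure.setLIntegral_rnDeriv_le s
    have h2 : r * μ s ≤ ∫⁻ x in s, (μ.map h).rnDeriv μ x ∂μ := by
      rw [← setLIntegral_const]
      exact lintegral_mono_ae (ae_restrict_of_ae hge)
    have h3 : r * μ s = 0 := le_antisymm (by simpa [hs0] using h2.trans h1) bot_le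
    exact (mul_eq_zero.mp h3).resolve_left hr.ne'
  refine ⟨key, ?_⟩
  rw [injective_iff_map_eq_zero]
  intro f hf
  have hf0 : (fun x => f (h x)) =ᵐ[μ] 0 := by
    filter_upwards [(hT f).symm, Lp.coeFn_zero ℝ 2 μ] with x h1 h2
    rw [h1, hf] at *
    exact h2
  set f' := (Lp.aestronglyMeasurable f).mk f with hf'def
  have hf'm : Measurable f' := (Lp.aestronglyMeasurable f).stronglyMeasurable_mk.measurable
  have hff' : f =ᵐ[μ] f' := (Lp.aestronglyMeasurable f).ae_eq_mk
  -- f ∘ h =ᵐ f' ∘ h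
  obtain ⟨N, hNsub, hNm, hN0⟩ := exists_measurable_superset_of_null hff'
  have hmapN : μ.map h N = 0 := hac hN0
  have hpreN : μ (h ⁻¹' N) = 0 := by rwa [Measure.map_apply hm hNm] at hmapN
  have hcomp : (fun x => f (h x)) =ᵐ[μ] fun x => f' (h x) := by
    refine measure_mono_null ?_ hpreN
    intro x hx
    exact hNsub hx
  have hf'0 : (fun x => f' (h x)) =ᵐ[μ] 0 := hcomp.symm.trans hf0
  set A := {y | f' y ≠ 0} with hA
  have hAm : MeasurableSet A := (hf'm (measurableSet_singleton 0)).compl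
  have hpreA : μ (h ⁻¹' A) = 0 := by
    refine measure_mono_null ?_ hf'0
    intro x hx
    exact hx
  have hmapA : μ.map h A = 0 := by rwa [Measure.map_apply hm hAm]
  have hA0 : μ A = 0 := key hmapA
  have : f =ᵐ[μ] 0 := by
    refine hff'.trans ?_
    refine measure_mono_null (fun x hx => hx) hA0
  ext1
  filter_upwards [this, Lp.coeFn_zero ℝ 2 μ] with x h1 h2
  rw [h1, h2]
end

section
/- Let (γ_n) be an orthonormal basis of L²(Ω) and h: Ω → Ω a measurable map inducing a bounded composition operator C_h on L²(Ω). Then (C_h γ_n) is a Riesz basis of L²(Ω) if and only if h is injective (in the sense that there exists a measurable ζ with ζ ∘ h = id a.e.) and there exists r > 0 such that g_h ≥ r almost everywhere. -/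
/-!
A Riesz basis is the image of an orthonormal basis under an isomorphism, and any two
orthonormal bases differ by a unitary, so `(C_h γ_n)` is a Riesz basis exactly when `C_h`
is bijective. Since `‖C_h f‖_{L²(μ)} = ‖f‖_{L²(h_#μ)}`, a bounded inverse, tested on
indicators, gives `μ(A) ≤ D · h_#μ(A)`, i.e. `g_h ≥ 1/D`. Conversely `g_h ≥ r` gives
`μ ≤ r⁻¹ · h_#μ`, so `C_h` is injective and `f ∘ ζ` is an `L²` preimage of `f`.
Surjectivity yields `ζ`: embed the standard Borel space `Ω` boundedly into `ℝ` by `φ`, write a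
positive `w ∈ L²` and `φ w` as `u ∘ h` and `v ∘ h`, and recover `x` from `(v / u)(h x) = φ x`.
-/

open MeasureTheory ENNReal

/-- A sequence is a Riesz basis if it is the image of an orthonormal (Hilbert) basis
under a bounded bijective operator. -/
def IsRieszBasis {H : Type*} [NormedAddCommGroup H] [InnerProductSpace ℝ H]
    [CompleteSpace H] (φ : ℕ → H) : Prop :=
  ∃ (γ : HilbertBasis ℕ ℝ H) (U : H ≃L[ℝ] H), ∀ n, φ n = U (γ n)

theorem isRieszBasis_comp_iff_bijective {H : Type*} [NormedAddCommGroup H]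
    [InnerProductSpace ℝ H] [CompleteSpace H] (γ : HilbertBasis ℕ ℝ H) (T : H →L[ℝ] H) :
    IsRieszBasis (fun n => T (γ n)) ↔ Function.Bijective T := by
  refine ⟨fun ⟨γ', U, hU⟩ => ?_, fun hT => ⟨γ, .ofBijective T (LinearMap.ker_eq_bot.mpr hT.1)
    (LinearMap.range_eq_top.mpr hT.2), fun _ => rfl⟩⟩
  let W : H ≃L[ℝ] H := (γ.repr.trans γ'.repr.symm).toContinuousLinearEquiv.trans U
  have hW : (W : H →L[ℝ] H) = T := by
    refine ContinuousLinearMap.ext_on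
      (Submodule.dense_iff_topologicalClosure_eq_top.mpr γ.dense_span) ?_
    rintro _ ⟨n, rfl⟩
    simp [W, hU, γ.repr_self, γ'.repr_symm_single]
  exact hW ▸ W.bijective

namespace MeasureTheory.Measure

variable {α : Type*} [MeasurableSpace α] {μ ν : Measure α} {c : ℝ≥0∞}

theorem ae_le_rnDeriv_of_forall_mul_le [SigmaFinite μ] [ν.HaveLebesgueDecomposition μ]
    (hνμ : ν ≪ μ) (h : ∀ s, MeasurableSet s → μ s < ∞ → c * μ s ≤ ν s) :
    ∀ᵐ x ∂μ, c ≤ ν.rnDeriv μ x :=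
  ae_le_of_forall_setLIntegral_le_of_sigmaFinite measurable_const fun s hs hμs => by
    rw [setLIntegral_const, setLIntegral_rnDeriv' hνμ hs]
    exact h s hs hμs

theorem smul_le_of_ae_le_rnDeriv [ν.HaveLebesgueDecomposition μ] (hνμ : ν ≪ μ)
    (h : ∀ᵐ x ∂μ, c ≤ ν.rnDeriv μ x) : c • μ ≤ ν :=
  calc c • μ = μ.withDensity fun _ => c := (withDensity_const c).symm
    _ ≤ μ.withDensity (ν.rnDeriv μ) := withDensity_mono h
    _ = ν := withDensity_rnDeriv_eq ν μ hνμ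

end MeasureTheory.Measure

section LeftInverse

variable {α : Type*} [MeasurableSpace α]

theorem exists_bounded_measurableEmbedding_real [StandardBorelSpace α] :
    ∃ φ : α → ℝ, MeasurableEmbedding φ ∧ ∀ x, |φ x| ≤ Real.pi / 2 := by
  obtain ⟨e, he⟩ := exists_measurableEmbedding_real α
  refine ⟨Real.arctan ∘ e, (Real.continuous_arctan.measurableEmbedding
    Real.arctan_injective).comp he, fun x => ?_⟩
  have := Real.arctan_mem_Ioo (e x)
  exact abs_le.mpr ⟨this.1.le, this.2.le⟩

theorem exists_pos_memLp_two (μ : Measure α) [SigmaFinite μ] :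
    ∃ w : α → ℝ, Measurable w ∧ (∀ x, 0 < w x) ∧ MemLp w 2 μ := by
  obtain ⟨g, hg0, hgm, hgμ⟩ := exists_pos_lintegral_lt_of_sigmaFinite μ one_ne_zero
  have hwm : Measurable fun x => Real.sqrt (g x) := (measurable_coe_nnreal_real.comp hgm).sqrt
  refine ⟨_, hwm, fun x => Real.sqrt_pos.mpr (hg0 x), ?_⟩
  rw [memLp_two_iff_integrable_sq hwm.aestronglyMeasurable]
  simpa using integrable_toReal_of_lintegral_ne_top hgm.coe_nnreal_ennreal.aemeasurable
    (hgμ.trans one_lt_top).ne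

theorem exists_measurable_comp_ae_eq_id [StandardBorelSpace α] {μ : Measure α} [SigmaFinite μ]
    {h : α → α}
    (hrange : ∀ g : α → ℝ, MemLp g 2 μ → ∃ f : α → ℝ, Measurable f ∧ f ∘ h =ᵐ[μ] g) :
    ∃ ζ : α → α, Measurable ζ ∧ ζ ∘ h =ᵐ[μ] id := by
  rcases isEmpty_or_nonempty α with hα | hα
  · exact ⟨id, measurable_id, ae_of_all _ isEmptyElim⟩
  obtain ⟨φ, hφ, hφb⟩ := exists_bounded_measurableEmbedding_real (α := α)
  obtain ⟨w, hwm, hw0, hw⟩ := exists_pos_memLp_two μ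
  have hφw : MemLp (φ * w) 2 μ := hw.of_le_mul (hφ.measurable.mul hwm).aestronglyMeasurable
    (ae_of_all _ fun x => by
      simpa [abs_mul] using mul_le_mul_of_nonneg_right (hφb x) (abs_nonneg (w x)))
  obtain ⟨u, hu, hu_eq⟩ := hrange w hw
  obtain ⟨v, hv, hv_eq⟩ := hrange _ hφw
  obtain ⟨ρ, hρ, hρφ⟩ := hφ.exists_measurable_extend measurable_id fun _ => hα
  refine ⟨ρ ∘ (v / u), hρ.comp (hv.div hu), ?_⟩
  filter_upwards [hu_eq, hv_eq] with x hux hvx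
  simp only [Function.comp_apply, Pi.div_apply, Pi.mul_apply] at hux hvx ⊢
  rw [hux, hvx, mul_div_cancel_right₀ _ (hw0 x).ne']
  exact congrFun hρφ x

end LeftInverse

section CompositionOperator

variable {α : Type*} [MeasurableSpace α] {μ : Measure α} {h : α → α}
  {T : Lp ℝ 2 μ →L[ℝ] Lp ℝ 2 μ}

def IsCompositionOperator (T : Lp ℝ 2 μ →L[ℝ] Lp ℝ 2 μ) (h : α → α) : Prop :=
  ∀ f : Lp ℝ 2 μ, (T f : α → ℝ) =ᵐ[μ] fun x => f (h x)

namespace IsCompositionOperator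

variable (hT : IsCompositionOperator T h) (hh : Measure.QuasiMeasurePreserving h μ μ)
include hT hh

theorem apply_ae_eq_comp {F : Lp ℝ 2 μ} {f : α → ℝ} (hF : F =ᵐ[μ] f) : T F =ᵐ[μ] f ∘ h :=
  (hT F).trans (hh.ae_eq_comp hF)

theorem eLpNorm_apply (f : Lp ℝ 2 μ) : eLpNorm (T f) 2 μ = eLpNorm f 2 (μ.map h) :=
  (eLpNorm_congr_ae (hT f)).trans (eLpNorm_map_measure
    ((Lp.aestronglyMeasurable f).mono_ac hh.absolutelyContinuous) hh.aemeasurable).symm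

theorem injective (hμ : μ ≪ μ.map h) : Function.Injective T := by
  refine (injective_iff_map_eq_zero T).mpr fun f hf => ?_
  have : eLpNorm f 2 (μ.map h) = 0 := by
    rw [← hT.eLpNorm_apply hh, ← Lp.enorm_def, hf, enorm_zero]
  rw [eLpNorm_eq_zero_iff ((Lp.aestronglyMeasurable f).mono_ac hh.absolutelyContinuous)
    two_ne_zero] at this
  exact (Lp.eq_zero_iff_ae_eq_zero).mpr (hμ.ae_le this)

theorem surjective {ζ : α → α} (hζ : Measurable ζ) (hζh : ζ ∘ h =ᵐ[μ] id) {c : ℝ≥0∞}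
    (hc : c ≠ ∞) (hμ : μ ≤ c • μ.map h) : Function.Surjective T := by
  intro g
  set g' := (Lp.aestronglyMeasurable g).mk g
  have hg' := (Lp.aestronglyMeasurable g).ae_eq_mk
  have hfh : (g' ∘ ζ) ∘ h =ᵐ[μ] g := by
    filter_upwards [hζh, hg'] with x hx hgx
    change g' (ζ (h x)) = g x
    rw [show ζ (h x) = x from hx, hgx]
  have hf : MemLp (g' ∘ ζ) 2 μ := by
    refine .of_measure_le_smul hc hμ ((memLp_map_measure_iff ?_ hh.aemeasurable).mpr ?_)
    · exact ((Lp.aestronglyMeasurable g).stronglyMeasurable_mk.comp_measurable hζ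
        ).aestronglyMeasurable
    · exact (Lp.memLp g).ae_eq hfh.symm
  exact ⟨hf.toLp _, Lp.ext ((hT.apply_ae_eq_comp hh hf.coeFn_toLp).trans hfh)⟩

theorem exists_measure_le_mul_map_of_bijective (hbij : Function.Bijective T) :
    ∃ D ≠ ∞, ∀ s, MeasurableSet s → μ s < ∞ → μ s ≤ D * μ.map h s := by
  let E := ContinuousLinearEquiv.ofBijective T (LinearMap.ker_eq_bot.mpr hbij.1)
    (LinearMap.range_eq_top.mpr hbij.2)
  let K := ‖(E.symm : Lp ℝ 2 μ →L[ℝ] Lp ℝ 2 μ)‖ₑ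
  refine ⟨K ^ 2, by simp [K], fun s hs hμs => ?_⟩
  let F := indicatorConstLp 2 hs hμs.ne (1 : ℝ)
  have hF : ‖F‖ₑ ≤ K * ‖T F‖ₑ := by
    simpa [E] using (E.symm : Lp ℝ 2 μ →L[ℝ] Lp ℝ 2 μ).le_opENorm (T F)
  rw [Lp.enorm_def, Lp.enorm_def, hT.eLpNorm_apply hh,
    eLpNorm_congr_ae indicatorConstLp_coeFn,
    eLpNorm_congr_ae (hh.absolutelyContinuous.ae_le indicatorConstLp_coeFn),
    eLpNorm_indicator_const hs two_ne_zero ofNat_ne_top,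
    eLpNorm_indicator_const hs two_ne_zero ofNat_ne_top] at hF
  simp only [enorm_one, one_mul, toReal_ofNat] at hF
  calc μ s = (μ s ^ (1 / 2 : ℝ)) ^ (2 : ℝ) := by rw [← rpow_mul]; norm_num
    _ ≤ (K * μ.map h s ^ (1 / 2 : ℝ)) ^ (2 : ℝ) := by gcongr
    _ = K ^ 2 * μ.map h s := by
      rw [mul_rpow_of_nonneg _ _ zero_le_two, ← rpow_mul]; norm_num

theorem exists_comp_ae_eq_of_surjective (hsurj : Function.Surjective T) {g : α → ℝ}
    (hg : MemLp g 2 μ) : ∃ f : α → ℝ, Measurable f ∧ f ∘ h =ᵐ[μ] g := by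
  obtain ⟨F, hF⟩ := hsurj (hg.toLp g)
  have hFm := Lp.aestronglyMeasurable F
  refine ⟨hFm.mk F, hFm.stronglyMeasurable_mk.measurable, ?_⟩
  have := hT.apply_ae_eq_comp hh hFm.ae_eq_mk
  rw [hF] at this
  exact this.symm.trans hg.coeFn_toLp

theorem bijective_iff [StandardBorelSpace α] [SigmaFinite μ] :
    Function.Bijective T ↔ (∃ ζ : α → α, Measurable ζ ∧ ζ ∘ h =ᵐ[μ] id) ∧
      ∃ r : ℝ≥0∞, 0 < r ∧ ∀ᵐ x ∂μ, r ≤ (μ.map h).rnDeriv μ x := by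
  constructor
  · intro hbij
    refine ⟨exists_measurable_comp_ae_eq_id fun g => hT.exists_comp_ae_eq_of_surjective hh hbij.2,
      ?_⟩
    obtain ⟨D, hD, hμ⟩ := hT.exists_measure_le_mul_map_of_bijective hh hbij
    refine ⟨D⁻¹, ENNReal.inv_pos.mpr hD, Measure.ae_le_rnDeriv_of_forall_mul_le
      hh.absolutelyContinuous fun s hs hμs => ?_⟩
    rw [← ENNReal.div_eq_inv_mul]
    exact ENNReal.div_le_of_le_mul' (hμ s hs hμs)
  · rintro ⟨⟨ζ, hζ, hζh⟩, r, hr, hrg⟩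
    let c := min r 1
    have hc0 : c ≠ 0 := (lt_min hr one_pos).ne'
    have hc : c ≠ ∞ := ((min_le_right r 1).trans_lt one_lt_top).ne
    have hμ : μ ≤ c⁻¹ • μ.map h := calc
      μ = c⁻¹ • c • μ := by rw [smul_smul, ENNReal.inv_mul_cancel hc0 hc, one_smul]
      _ ≤ c⁻¹ • μ.map h := by
        gcongr
        exact Measure.smul_le_of_ae_le_rnDeriv hh.absolutelyContinuous
          (hrg.mono fun x hx => (min_le_left r 1).trans hx)
    exact ⟨hT.injective hh (Measure.absolutelyContinuous_of_le_smul hμ),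
      hT.surjective hh hζ hζh (ENNReal.inv_ne_top.mpr hc0) hμ⟩

end IsCompositionOperator

end CompositionOperator

theorem induced_Riesz_basis_iff_general
    {d : ℕ} (Ω : Set (EuclideanSpace ℝ (Fin d))) (hΩ : IsOpen Ω)
    (h : Ω → Ω) (hm : Measurable h)
    (hac : (lebOn Ω).map h ≪ lebOn Ω)
    (γ : HilbertBasis ℕ ℝ (Lp ℝ 2 (lebOn Ω)))
    (T : Lp ℝ 2 (lebOn Ω) →L[ℝ] Lp ℝ 2 (lebOn Ω))
    (hT : ∀ f : Lp ℝ 2 (lebOn Ω), (T f : Ω → ℝ) =ᵐ[lebOn Ω] fun x => f (h x)) :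
    IsRieszBasis (fun n => T (γ n)) ↔
      ((∃ ζ : Ω → Ω, Measurable ζ ∧ (ζ ∘ h : Ω → Ω) =ᵐ[lebOn Ω] id) ∧
        ∃ r : ℝ≥0∞, 0 < r ∧
          ∀ᵐ x ∂(lebOn Ω), r ≤ ((lebOn Ω).map h).rnDeriv (lebOn Ω) x) := by
  have := sigmaFinite_lebOn hΩ.measurableSet
  have := hΩ.polishSpace
  rw [isRieszBasis_comp_iff_bijective]
  exact IsCompositionOperator.bijective_iff hT ⟨hm, hac⟩

theorem induced_Riesz_basis_iff
    {d : ℕ} (Ω : Set (EuclideanSpace ℝ (Fin d))) (hΩ : IsOpen Ω)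
    (h : Ω → Ω) (hm : Measurable h)
    (hac : (lebOn Ω).map h ≪ lebOn Ω)
    (hbd : essSup (((lebOn Ω).map h).rnDeriv (lebOn Ω)) (lebOn Ω) ≠ ⊤)
    (γ : HilbertBasis ℕ ℝ (Lp ℝ 2 (lebOn Ω)))
    (T : Lp ℝ 2 (lebOn Ω) →L[ℝ] Lp ℝ 2 (lebOn Ω))
    (hT : ∀ f : Lp ℝ 2 (lebOn Ω), (T f : Ω → ℝ) =ᵐ[lebOn Ω] fun x => f (h x)) :
    IsRieszBasis (fun n => T (γ n)) ↔
      ((∃ ζ : Ω → Ω, Measurable ζ ∧ (ζ ∘ h : Ω → Ω) =ᵐ[lebOn Ω] id) ∧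
        ∃ r : ℝ≥0∞, 0 < r ∧
          ∀ᵐ x ∂(lebOn Ω), r ≤ ((lebOn Ω).map h).rnDeriv (lebOn Ω) x) :=
  induced_Riesz_basis_iff_general Ω hΩ h hm hac γ T hT
end

section
/- Let h: Ω → Ω be a non-singular injective measurable mapping such that g_h ≥ r almost everywhere for some r > 0 and g_h is essentially bounded. Then h is bijective, i.e., there exists a measurable ζ with h ∘ ζ = id_Ω a.e. and ζ ∘ h = id_Ω a.e. -/
open MeasureTheory ENNReal

theorem injective_bounded_density_implies_bijective
    {d : ℕ} (Ω : Set (EuclideanSpace ℝ (Fin d))) (hΩ : IsOpen Ω)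
    (h : Ω → Ω) (hm : Measurable h)
    (hac : (lebOn Ω).map h ≪ lebOn Ω)
    (hbd : essSup (((lebOn Ω).map h).rnDeriv (lebOn Ω)) (lebOn Ω) ≠ ⊤)
    (hinj : ∃ ζ : Ω → Ω, Measurable ζ ∧ (ζ ∘ h : Ω → Ω) =ᵐ[lebOn Ω] id)
    (r : ℝ≥0∞) (hr : 0 < r)
    (hge : ∀ᵐ x ∂(lebOn Ω), r ≤ ((lebOn Ω).map h).rnDeriv (lebOn Ω) x) :
    ∃ ζ : Ω → Ω, Measurable ζ ∧
      (h ∘ ζ : Ω → Ω) =ᵐ[lebOn Ω] id ∧ (ζ ∘ h : Ω → Ω) =ᵐ[lebOn Ω] id := by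
  obtain ⟨ζ, hζm, hζh⟩ := hinj
  refine ⟨ζ, hζm, ?_, hζh⟩
  set μ := lebOn Ω
  -- the bad set
  have hsm : MeasurableSet {y : Ω | h (ζ y) = y} :=
    StronglyMeasurable.measurableSet_eq_fun (hm.comp hζm).stronglyMeasurable stronglyMeasurable_id
  set s : Set Ω := {y : Ω | h (ζ y) = y}ᶜ with hs
  have hsmc : MeasurableSet s := hsm.compl
  -- pushforward measure of s is zero
  have hpre : μ (h ⁻¹' s) = 0 := by
    refine measure_mono_null (fun x hx => ?_) hζh
    intro hxe
    apply hx
    show h (ζ (h x)) = h x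
    have : ζ (h x) = x := hxe
    rw [this]
  have hmap : (μ.map h) s = 0 := by
    rw [Measure.map_apply hm hsmc]
    exact hpre
  -- r * μ s ≤ ∫ rnDeriv ≤ map h μ s = 0
  have hle : r * μ s ≤ (μ.map h) s := by
    calc r * μ s = ∫⁻ _ in s, r ∂μ := by rw [setLIntegral_const, mul_comm]
    _ ≤ ∫⁻ x in s, (μ.map h).rnDeriv μ x ∂μ :=
        lintegral_mono_ae (ae_restrict_of_ae hge)
    _ ≤ (μ.map h) s := Measure.setLIntegral_rnDeriv_le s
  rw [hmap, le_zero_iff, mul_eq_zero] at hle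
  have hμs : μ s = 0 := hle.resolve_left hr.ne'
  exact hμs
end

section
/- Let (γ_n) be an orthonormal basis of L²(Ω) and h a measurable bijection such that (C_h γ_n) is a Riesz basis of L²(Ω). Then for every f in L²(Ω), f = Σ_n ⟨f, g_{h⁻¹}·(γ_n ∘ h)⟩ (γ_n ∘ h), i.e., (M_{g_{h⁻¹}} C_h γ_n) is the bi-orthogonal dual Riesz basis of (C_h γ_n). -/
/-!
Since `T` maps the Hilbert basis `γ` onto a Riesz basis, `T` agrees on `γ` with a bounded
invertible operator and hence is one. Expanding `T⁻¹ f` in `γ` and applying `T` gives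
`f = ∑ ⟪T⁻¹ f, γ n⟫ T (γ n)`. As `T` is composition with `h`, the coefficient is
`∫ f ∘ ζ · γ n`, which the change of variables `x ↦ ζ x` together with the Radon–Nikodym
derivative of `ζ_# μ` turns into the integral of the statement.
-/

open MeasureTheory ENNReal

theorem MeasureTheory.sigmaFinite_comap_subtype_val {α : Type*} [MeasurableSpace α]
    (μ : Measure α) [SigmaFinite μ] {s : Set α} (hs : MeasurableSet s) :
    SigmaFinite (μ.comap ((↑) : s → α)) :=
  SigmaFinite.of_map _ measurable_subtype_coe.aemeasurable
    (by rw [map_comap_subtype_coe hs]; infer_instance)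

section HilbertBasis

variable {ι 𝕜 E F : Type*} [RCLike 𝕜] [NormedAddCommGroup E] [InnerProductSpace 𝕜 E]
  [NormedAddCommGroup F] [NormedSpace 𝕜 F]

theorem HilbertBasis.continuousLinearMap_ext (γ : HilbertBasis ι 𝕜 E) {S T : E →L[𝕜] F}
    (h : ∀ i, S (γ i) = T (γ i)) : S = T :=
  ContinuousLinearMap.ext_on (Submodule.dense_iff_topologicalClosure_eq_top.mpr γ.dense_span)
    (by rintro _ ⟨i, rfl⟩; exact h i)

theorem HilbertBasis.hasSum_repr_symm_apply_smul (γ : HilbertBasis ι 𝕜 E) (A : E ≃L[𝕜] F)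
    (f : F) : HasSum (fun i => γ.repr (A.symm f) i • A (γ i)) f := by
  simpa using (γ.hasSum_repr (A.symm f)).mapL (A : E →L[𝕜] F)

end HilbertBasis

theorem IsRieszBasis.exists_continuousLinearEquiv_eq {H : Type*} [NormedAddCommGroup H]
    [InnerProductSpace ℝ H] [CompleteSpace H] {γ : HilbertBasis ℕ ℝ H} {T : H →L[ℝ] H}
    (hT : IsRieszBasis fun n => T (γ n)) : ∃ A : H ≃L[ℝ] H, (A : H →L[ℝ] H) = T := by
  obtain ⟨γ', U, hU⟩ := hT
  refine ⟨(γ.repr.trans γ'.repr.symm).toContinuousLinearEquiv.trans U,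
    γ.continuousLinearMap_ext fun n => ?_⟩
  simp [hU n, HilbertBasis.repr_self, HilbertBasis.repr_symm_single]

section ChangeOfVariables

variable {α β : Type*} [MeasurableSpace α] [MeasurableSpace β] {μ : Measure α} {ν : Measure β}
  [SigmaFinite μ] [SigmaFinite ν]

theorem MeasurableEquiv.integral_rnDeriv_map_smul {E : Type*} [NormedAddCommGroup E]
    [NormedSpace ℝ E] (e : α ≃ᵐ β) (he : μ.map e ≪ ν) (g : β → E) :
    ∫ y, ((μ.map e).rnDeriv ν y).toReal • g y ∂ν = ∫ x, g (e x) ∂μ := by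
  have := e.sigmaFinite_map (μ := μ)
  rw [integral_rnDeriv_smul he, e.measurableEmbedding.integral_map]

theorem MeasurableEquiv.integral_mul_rnDeriv_map_mul_eq_inner (e : α ≃ᵐ β) (he : μ.map e ≪ ν)
    {f : Lp ℝ 2 ν} {u : Lp ℝ 2 μ} (hf : f =ᵐ[ν] fun y => u (e.symm y)) (v : Lp ℝ 2 μ) :
    ∫ y, f y * ((μ.map e).rnDeriv ν y).toReal * v (e.symm y) ∂ν = inner ℝ u v := by
  have hfe : (fun x => f (e x)) =ᵐ[μ] u := by
    filter_upwards [Measure.QuasiMeasurePreserving.ae_eq_comp ⟨e.measurable, he⟩ hf]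
      with x hx
    simpa using hx
  calc ∫ y, f y * ((μ.map e).rnDeriv ν y).toReal * v (e.symm y) ∂ν
      = ∫ y, ((μ.map e).rnDeriv ν y).toReal • (f y * v (e.symm y)) ∂ν := by
        congr 1 with y; rw [smul_eq_mul]; ring
    _ = ∫ x, f (e x) * v x ∂μ := (e.integral_rnDeriv_map_smul he _).trans (by simp)
    _ = ∫ x, u x * v x ∂μ := integral_congr_ae (hfe.mul Filter.EventuallyEq.rfl)
    _ = inner ℝ u v := by simp [L2.inner_def, mul_comm]

end ChangeOfVariables

theorem dual_Riesz_expansion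
    {d : ℕ} (Ω : Set (EuclideanSpace ℝ (Fin d))) (hΩ : IsOpen Ω)
    (h ζ : Ω → Ω) (hm : Measurable h) (hmζ : Measurable ζ)
    (hζh : ∀ x, ζ (h x) = x) (hhζ : ∀ x, h (ζ x) = x)
    (hacζ : (lebOn Ω).map ζ ≪ lebOn Ω)
    (γ : HilbertBasis ℕ ℝ (Lp ℝ 2 (lebOn Ω)))
    (T : Lp ℝ 2 (lebOn Ω) →L[ℝ] Lp ℝ 2 (lebOn Ω))
    (hT : ∀ f : Lp ℝ 2 (lebOn Ω), (T f : Ω → ℝ) =ᵐ[lebOn Ω] fun x => f (h x))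
    (hRiesz : IsRieszBasis (fun n => T (γ n))) :
    ∀ f : Lp ℝ 2 (lebOn Ω),
      HasSum (fun n : ℕ =>
        (∫ x, f x * (((lebOn Ω).map ζ).rnDeriv (lebOn Ω) x).toReal *
            (γ n) (h x) ∂(lebOn Ω)) • T (γ n)) f := by
  intro f
  have : SigmaFinite (lebOn Ω) := sigmaFinite_comap_subtype_val _ hΩ.measurableSet
  let e : Ω ≃ᵐ Ω := ⟨⟨ζ, h, hhζ, hζh⟩, hmζ, hm⟩
  obtain ⟨A, rfl⟩ := hRiesz.exists_continuousLinearEquiv_eq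
  have hf : (f : Ω → ℝ) =ᵐ[lebOn Ω] fun x => A.symm f (h x) := by
    simpa using hT (A.symm f)
  convert γ.hasSum_repr_symm_apply_smul A f using 3 with n
  · rw [γ.repr_apply_apply, real_inner_comm]
    exact e.integral_mul_rnDeriv_map_mul_eq_inner hacζ hf (γ n)
  · rfl
end
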